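/- arXiv:1512.03200 — 5 statements merged into one kernel-verified Lean document; each statement's English description precedes it below -/
import Mathlib

section
/- Let G be a graph on vertex set V, M a symmetric V×V matrix, d = corank(M), and U the d×V matrix whose rows form a basis of ker(M); write u_i for the i-th column of U. Then there exists a nonzero symmetric V×V matrix X with MX = 0 and X_{ij} = 0 whenever i = j or ij ∈ E, if and only if there exists a nonzero symmetric d×d matrix N such that u_iᵀ N u_i = 0 for all i ∈ V and u_iᵀ N u_j = 0 for all edges ij ∈ E. -/
/-!
A symmetric `X` with `M X = 0` has its columns in `ker M`, which is the row space of `U`, so it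
factors as `X = Uᵀ N U` with `N` symmetric; since the rows of `U` are independent, `U` has a right
inverse `W` and `N = Wᵀ X W` is unique, in particular nonzero iff `X` is. As
`(Uᵀ N U)ᵢⱼ = u_iᵀ N u_j`, the zero pattern required of `X` is exactly the one required of `N`.
-/

open Matrix

namespace Matrix

variable {l m n o R K : Type*} [CommSemiring R] [Field K]

theorem transpose_mul_mul_apply [Fintype l] (A : Matrix l m R) (N : Matrix l l R)
    (B : Matrix l n R) (i : m) (j : n) :
    (Aᵀ * N * B) i j = (fun k => A k i) ⬝ᵥ N *ᵥ (fun k => B k j) := by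
  rw [Matrix.mul_assoc]
  rfl

theorem exists_mul_eq_one_of_linearIndependent_row [Fintype m] [Fintype n] [DecidableEq m]
    {U : Matrix m n K} (hU : LinearIndependent K U.row) : ∃ W : Matrix n m K, U * W = 1 := by
  rw [← mulVec_surjective_iff_exists_right_inverse, ← coe_mulVecLin, ← LinearMap.range_eq_top]
  apply Submodule.eq_top_of_finrank_eq
  rw [← rank, hU.rank_matrix, Module.finrank_fintype_fun_eq_card]

theorem mul_eq_zero_iff_forall_col_mem_ker [Fintype m] {M : Matrix l m R} {X : Matrix m o R} :
    M * X = 0 ↔ ∀ j, Xᵀ j ∈ LinearMap.ker M.mulVecLin := by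
  rw [← transpose_eq_zero]
  exact funext_iff

theorem mul_eq_zero_iff_exists_eq_mul [Fintype m] [Fintype n] {M : Matrix l m R}
    {A : Matrix m n R} (hA : LinearMap.range A.mulVecLin = LinearMap.ker M.mulVecLin)
    {X : Matrix m o R} :
    M * X = 0 ↔ ∃ C : Matrix n o R, X = A * C := by
  rw [mul_eq_zero_iff_forall_col_mem_ker, ← hA]
  constructor
  · intro hcol
    choose c hc using hcol
    exact ⟨(of c)ᵀ, ext fun i j => (congrFun (hc j) i).symm⟩
  · rintro ⟨C, rfl⟩ j
    exact ⟨Cᵀ j, rfl⟩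

variable [Fintype m] [Fintype n] [DecidableEq m] {U : Matrix m n R} {W : Matrix n m R}

theorem transpose_mul_mul_cancel (hUW : U * W = 1) (N : Matrix m m R) :
    Wᵀ * (Uᵀ * N * U) * W = N := by
  calc Wᵀ * (Uᵀ * N * U) * W = (U * W)ᵀ * N * (U * W) := by
        simp only [transpose_mul, Matrix.mul_assoc]
    _ = N := by rw [hUW, transpose_one, Matrix.one_mul, Matrix.mul_one]

theorem transpose_mul_mul_eq_zero_iff (hUW : U * W = 1) {N : Matrix m m R} :
    Uᵀ * N * U = 0 ↔ N = 0 := by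
  refine ⟨fun h => ?_, fun h => by rw [h, Matrix.mul_zero, Matrix.zero_mul]⟩
  rw [← transpose_mul_mul_cancel hUW N, h, Matrix.mul_zero, Matrix.zero_mul]

theorem isSymm_and_mul_eq_zero_iff {M : Matrix l n R} (hUW : U * W = 1)
    (hU : LinearMap.range Uᵀ.mulVecLin = LinearMap.ker M.mulVecLin) {X : Matrix n n R} :
    X.IsSymm ∧ M * X = 0 ↔ ∃ N : Matrix m m R, N.IsSymm ∧ Uᵀ * N * U = X := by
  constructor
  · rintro ⟨hX, hMX⟩
    obtain ⟨C, hXC⟩ := (mul_eq_zero_iff_exists_eq_mul hU).1 hMX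
    have hleft : Uᵀ * Wᵀ * X = X := by
      rw [hXC, Matrix.mul_assoc, ← Matrix.mul_assoc Wᵀ, ← transpose_mul, hUW, transpose_one,
        Matrix.one_mul]
    have hright : X * (W * U) = X := by
      simpa only [transpose_mul, transpose_transpose, hX.eq, Matrix.mul_assoc] using
        congrArg transpose hleft
    refine ⟨Wᵀ * X * W, ?_, ?_⟩
    · simp only [IsSymm, transpose_mul, transpose_transpose, hX.eq, Matrix.mul_assoc]
    · calc Uᵀ * (Wᵀ * X * W) * U = Uᵀ * Wᵀ * X * (W * U) := by simp only [Matrix.mul_assoc]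
        _ = X := by rw [hleft, hright]
  · rintro ⟨N, hN, rfl⟩
    refine ⟨by simp only [IsSymm, transpose_mul, transpose_transpose, hN.eq, Matrix.mul_assoc], ?_⟩
    have hMU : M * Uᵀ = 0 := (mul_eq_zero_iff_exists_eq_mul hU).2 ⟨1, (Matrix.mul_one _).symm⟩
    rw [Matrix.mul_assoc, ← Matrix.mul_assoc, hMU, Matrix.zero_mul]

end Matrix

theorem stmt_1_general {V : Type*} [Fintype V] {d : ℕ}
    (G : SimpleGraph V) (M : Matrix V V ℝ)
    (U : Matrix (Fin d) V ℝ)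
    (b : Module.Basis (Fin d) ℝ (LinearMap.ker M.mulVecLin))
    (hU : ∀ i : Fin d, ((b i : V → ℝ)) = U i) :
    (∃ X : Matrix V V ℝ, X ≠ 0 ∧ X.IsHermitian ∧ M * X = 0 ∧
        ∀ i j : V, (i = j ∨ G.Adj i j) → X i j = 0) ↔
    (∃ N : Matrix (Fin d) (Fin d) ℝ, N ≠ 0 ∧ N.IsHermitian ∧
        (∀ i : V, (fun k => U k i) ⬝ᵥ N.mulVec (fun k => U k i) = 0) ∧
        (∀ i j : V, G.Adj i j → (fun k => U k i) ⬝ᵥ N.mulVec (fun k => U k j) = 0)) := by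
  have hbU : (LinearMap.ker M.mulVecLin).subtype ∘ b = U.row := funext hU
  obtain ⟨W, hUW⟩ := exists_mul_eq_one_of_linearIndependent_row
    (hbU ▸ b.linearIndependent.map' _ (LinearMap.ker M.mulVecLin).ker_subtype)
  have hrange : LinearMap.range Uᵀ.mulVecLin = LinearMap.ker M.mulVecLin := by
    rw [range_mulVecLin, col_transpose, ← hbU, Set.range_comp, Submodule.span_image, b.span_eq,
      Submodule.map_top, Submodule.range_subtype]
  simp only [isHermitian_iff_isSymm, ← transpose_mul_mul_apply]
  constructor
  · rintro ⟨X, hX0, hX, hMX, hXE⟩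
    obtain ⟨N, hN, rfl⟩ := (isSymm_and_mul_eq_zero_iff hUW hrange).1 ⟨hX, hMX⟩
    exact ⟨N, mt (transpose_mul_mul_eq_zero_iff hUW).2 hX0, hN, fun i => hXE i i (.inl rfl),
      fun i j h => hXE i j (.inr h)⟩
  · rintro ⟨N, hN0, hN, hdiag, hedge⟩
    obtain ⟨hX, hMX⟩ := (isSymm_and_mul_eq_zero_iff hUW hrange).2 ⟨N, hN, rfl⟩
    refine ⟨Uᵀ * N * U, mt (transpose_mul_mul_eq_zero_iff hUW).1 hN0, hX, hMX, ?_⟩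
    rintro i j (rfl | h)
    exacts [hdiag i, hedge i j h]

/-- There is a nonzero symmetric `X` with `M * X = 0` vanishing on the diagonal and on edges
iff there is a nonzero symmetric `d × d` matrix `N` with `u_iᵀ N u_i = 0` for all vertices `i`
and `u_iᵀ N u_j = 0` for all edges `ij`, where `u_i` is the `i`-th column of `U` and the rows
of `U` form a basis of `ker M`. -/
theorem stmt_1 {V : Type*} [Fintype V] [DecidableEq V] {d : ℕ}
    (G : SimpleGraph V) (M : Matrix V V ℝ) (hM : M.IsHermitian)
    (U : Matrix (Fin d) V ℝ)
    (b : Module.Basis (Fin d) ℝ (LinearMap.ker M.mulVecLin))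
    (hU : ∀ i : Fin d, ((b i : V → ℝ)) = U i) :
    (∃ X : Matrix V V ℝ, X ≠ 0 ∧ X.IsHermitian ∧ M * X = 0 ∧
        ∀ i j : V, (i = j ∨ G.Adj i j) → X i j = 0) ↔
    (∃ N : Matrix (Fin d) (Fin d) ℝ, N ≠ 0 ∧ N.IsHermitian ∧
        (∀ i : V, (fun k => U k i) ⬝ᵥ N.mulVec (fun k => U k i) = 0) ∧
        (∀ i j : V, G.Adj i j → (fun k => U k i) ⬝ᵥ N.mulVec (fun k => U k j) = 0)) :=
  stmt_1_general G M U b hU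
end

section
/- Let Q be a homogeneous quadric in ℝ⁴ (zero set of a nonzero symmetric quadratic form) that is not the union of two linear hyperplanes. If a line ℓ (1-dimensional linear subspace) is contained in three distinct 2-dimensional linear subspaces P₁, P₂, P₃ each contained in Q, then ℓ is contained in every 2-dimensional linear subspace contained in Q. -/
/-!
Let `B` be the symmetric bilinear form of `N`. A totally isotropic hyperplane `T = ker φ` is
impossible: with `φ w = 1`, isotropy of `y - φ y • w` gives
`B y y = φ y * (2 * B w y - φ y * B w w)`, so `Q` would be `T` together with a second hyperplane
(or `B = 0`). If `ℓ` contained a `v` with `B v ≠ 0`, the hyperplane `ker (B v)` would contain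
the three planes, and as `P₁ ⊔ P₂` is already a hyperplane, `P₃ ≤ P₁ ⊔ P₂`. Writing some
`u ∈ P₃ \ ℓ` as `p₁ + p₂`, isotropy of `u` forces `B p₁ p₂ = 0`, which makes `P₁ ⊔ P₂` totally
isotropic. So `ℓ` lies in the radical of `B`, and for an isotropic plane `P` not containing `ℓ`,
`P ⊔ ℓ` would again be a totally isotropic hyperplane.
-/

open Matrix Module Submodule
open LinearMap (BilinForm ker)

section Finrank

variable {K V : Type*} [DivisionRing K] [AddCommGroup V] [Module K V] [FiniteDimensional K V]
  {W P P' : Submodule K V}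

theorem Submodule.inf_eq_of_finrank_eq_add_one (hWP : W ≤ P) (hWP' : W ≤ P')
    (hP : finrank K P = finrank K W + 1) (hPP' : ¬ P ≤ P') : P ⊓ P' = W := by
  refine (eq_of_le_of_finrank_le (le_inf hWP hWP') ?_).symm
  have := finrank_lt_finrank_of_lt (inf_lt_left.2 hPP')
  omega

theorem Submodule.finrank_sup_eq_add_one (hWP : W ≤ P) (hWP' : W ≤ P')
    (hP : finrank K P = finrank K W + 1) (hPP' : ¬ P ≤ P') :
    finrank K ↥(P' ⊔ P) = finrank K P' + 1 := by
  have := finrank_sup_add_finrank_inf_eq P' P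
  rw [inf_comm, inf_eq_of_finrank_eq_add_one hWP hWP' hP hPP'] at this
  omega

theorem Submodule.eq_sup_span_singleton (hWP : W ≤ P) (hP : finrank K P = finrank K W + 1)
    {u : V} (hu : u ∈ P) (huW : u ∉ W) : P = W ⊔ span K {u} := by
  have hu0 : u ≠ 0 := fun h => huW (h ▸ W.zero_mem)
  refine (eq_of_le_of_finrank_eq (sup_le hWP ((span_singleton_le_iff_mem _ _).2 hu)) ?_).symm
  rw [finrank_sup_eq_add_one bot_le bot_le (by simp [finrank_span_singleton hu0])
    (by rwa [span_singleton_le_iff_mem]), hP]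

end Finrank

namespace LinearMap.BilinForm

variable {K V : Type*} [Field K] [AddCommGroup V] [Module K V] {B : BilinForm K V}

def IsTotallyIsotropic (B : BilinForm K V) (W : Submodule K V) : Prop :=
  ∀ x ∈ W, ∀ y ∈ W, B x y = 0

theorem IsSymm.isTotallyIsotropic_of_apply_self [NeZero (2 : K)] (hB : B.IsSymm)
    {W : Submodule K V} (h : ∀ x ∈ W, B x x = 0) : B.IsTotallyIsotropic W := by
  intro x hx y hy
  rw [hB.polarization, h x hx, h y hy, h _ (W.add_mem hx hy)]
  simp

theorem IsTotallyIsotropic.sup (hB : B.IsSymm) {W W' : Submodule K V}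
    (hW : B.IsTotallyIsotropic W) (hW' : B.IsTotallyIsotropic W')
    (h : ∀ x ∈ W, ∀ y ∈ W', B x y = 0) : B.IsTotallyIsotropic (W ⊔ W') := by
  rintro _ hxx' _ hyy'
  obtain ⟨x, hx, x', hx', rfl⟩ := mem_sup.1 hxx'
  obtain ⟨y, hy, y', hy', rfl⟩ := mem_sup.1 hyy'
  simp only [map_add, LinearMap.add_apply, hW x hx y hy, hW' x' hx' y' hy', h x hx y' hy',
    hB.eq x' y, h y hy x' hx', add_zero]

theorem IsSymm.apply_self_eq_mul (hB : B.IsSymm) {φ : Dual K V} {w : V} (hw : φ w = 1)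
    (hI : B.IsTotallyIsotropic (ker φ)) (y : V) :
    B y y = φ y * (2 * B w y - φ y * B w w) := by
  have hz : y - φ y • w ∈ ker φ := by simp [hw]
  have := hI _ hz _ hz
  simp only [map_sub, map_smul, LinearMap.sub_apply, LinearMap.smul_apply, smul_eq_mul,
    hB.eq y w] at this
  linear_combination this

theorem IsTotallyIsotropic.eq_zero_or_exists_setOf_apply_self_eq_union [NeZero (2 : K)]
    [FiniteDimensional K V] (hB : B.IsSymm) {T : Submodule K V}
    (hT : finrank K T + 1 = finrank K V) (hI : B.IsTotallyIsotropic T) :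
    B = 0 ∨ ∃ H : Submodule K V,
      finrank K H + 1 = finrank K V ∧ {x | B x x = 0} = (T : Set V) ∪ H := by
  obtain ⟨w₀, -, hw₀T⟩ :=
    SetLike.exists_of_lt (lt_top_of_finrank_lt_finrank (s := T) (by omega))
  obtain ⟨φ, hφw₀, hTφ⟩ := exists_le_ker_of_notMem hw₀T
  have hφ : φ ≠ 0 := by rintro rfl; simp at hφw₀
  set w := (φ w₀)⁻¹ • w₀
  have hw : φ w = 1 := by simp [w, hφw₀]
  obtain rfl : T = ker φ :=
    eq_of_le_of_finrank_eq hTφ (by have := Dual.finrank_ker_add_one_of_ne_zero hφ; omega)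
  set g : Dual K V := (2 : K) • B w - B w w • φ
  have hfactor : ∀ y, B y y = φ y * g y := fun y => by
    rw [hB.apply_self_eq_mul hw hI y]
    simp [g, mul_comm (B w w)]
  by_cases hg : g = 0
  · exact Or.inl (ext_of_isSymm hB isSymm_zero fun y => by simp [hfactor, hg])
  · refine Or.inr ⟨ker g, Dual.finrank_ker_add_one_of_ne_zero hg, ?_⟩
    ext y
    simp [hfactor]

theorem IsSymm.apply_eq_zero_of_mem_three_planes [NeZero (2 : K)] [FiniteDimensional K V]
    (hB : B.IsSymm) (hV : finrank K V = 4)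
    (hno : ∀ T : Submodule K V, finrank K T = 3 → ¬ B.IsTotallyIsotropic T)
    {ℓ P₁ P₂ P₃ : Submodule K V} (hℓ : finrank K ℓ = 1)
    (hP₁ : finrank K P₁ = 2) (hP₂ : finrank K P₂ = 2) (hP₃ : finrank K P₃ = 2)
    (h₁₂ : P₁ ≠ P₂) (h₁₃ : P₁ ≠ P₃) (h₂₃ : P₂ ≠ P₃) (hℓ₁ : ℓ ≤ P₁) (hℓ₂ : ℓ ≤ P₂) (hℓ₃ : ℓ ≤ P₃)
    (hI₁ : B.IsTotallyIsotropic P₁) (hI₂ : B.IsTotallyIsotropic P₂)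
    (hI₃ : B.IsTotallyIsotropic P₃) {v : V} (hv : v ∈ ℓ) : B v = 0 := by
  by_contra hBv
  have not_le_of_ne : ∀ {P P' : Submodule K V}, finrank K P = 2 → finrank K P' = 2 → P ≠ P' →
      ¬ P ≤ P' := fun hP hP' hne hle => hne (eq_of_le_of_finrank_eq hle (hP.trans hP'.symm))
  have hW : finrank K ↥(P₁ ⊔ P₂) = 3 := by
    rw [finrank_sup_eq_add_one hℓ₂ hℓ₁ (by omega) (not_le_of_ne hP₂ hP₁ h₁₂.symm), hP₁]
  have hP₃W : P₃ ≤ P₁ ⊔ P₂ := by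
    have hWv : P₁ ⊔ P₂ = ker (B v) := eq_of_le_of_finrank_eq
      (sup_le (fun x hx => hI₁ v (hℓ₁ hv) x hx) (fun x hx => hI₂ v (hℓ₂ hv) x hx))
      (by have := Dual.finrank_ker_add_one_of_ne_zero hBv; omega)
    exact hWv ▸ fun x hx => hI₃ v (hℓ₃ hv) x hx
  obtain ⟨u, hu, huℓ⟩ := SetLike.exists_of_lt (lt_of_le_of_ne hℓ₃ fun h => by
    subst h; omega)
  have hu_not_mem : ∀ {P : Submodule K V}, finrank K P = 2 → ℓ ≤ P → P ≠ P₃ → u ∉ P :=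
    fun hP hℓP hne huP => huℓ (inf_eq_of_finrank_eq_add_one hℓ₃ hℓP (by omega)
      (not_le_of_ne hP₃ hP hne.symm) ▸ ⟨hu, huP⟩)
  obtain ⟨p₁, hp₁, p₂, hp₂, rfl⟩ := mem_sup.1 (hP₃W hu)
  have hp₁ℓ : p₁ ∉ ℓ := fun h => hu_not_mem hP₂ hℓ₂ h₂₃ (add_mem (hℓ₂ h) hp₂)
  have hp₂ℓ : p₂ ∉ ℓ := fun h => hu_not_mem hP₁ hℓ₁ h₁₃ (add_mem hp₁ (hℓ₁ h))
  have hp₁p₂ : B p₁ p₂ = 0 := by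
    have := hI₃ _ hu _ hu
    simp only [map_add, LinearMap.add_apply, hI₁ p₁ hp₁ p₁ hp₁, hI₂ p₂ hp₂ p₂ hp₂,
      hB.eq p₂ p₁, zero_add, add_zero, ← two_mul, mul_eq_zero, two_ne_zero, false_or] at this
    exact this
  have hcross : ∀ x ∈ P₁, ∀ y ∈ P₂, B x y = 0 := by
    have hp₁_orth : P₂ ≤ ker (B p₁) := by
      rw [eq_sup_span_singleton hℓ₂ (by omega) hp₂ hp₂ℓ]
      exact sup_le (fun l hl => hI₁ _ hp₁ _ (hℓ₁ hl)) ((span_singleton_le_iff_mem _ _).2 hp₁p₂)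
    intro x hx y hy
    have : P₁ ≤ ker (B.flip y) := by
      rw [eq_sup_span_singleton hℓ₁ (by omega) hp₁ hp₁ℓ]
      exact sup_le (fun l hl => hI₂ _ (hℓ₂ hl) _ hy)
        ((span_singleton_le_iff_mem _ _).2 (hp₁_orth hy))
    exact this hx
  exact hno _ hW (hI₁.sup hB hI₂ hcross)

end LinearMap.BilinForm

/-- Let `Q` be a homogeneous quadric in `ℝ⁴` not being the union of two hyperplanes.
If a line is contained in three distinct planes contained in `Q`, then it is contained in
every plane contained in `Q`. -/
theorem stmt_4 (N : Matrix (Fin 4) (Fin 4) ℝ) (hN : N.IsHermitian) (hN0 : N ≠ 0)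
    (Q : Set (Fin 4 → ℝ)) (hQ : Q = {x : Fin 4 → ℝ | x ⬝ᵥ N.mulVec x = 0})
    (hnot : ¬ ∃ H₁ H₂ : Submodule ℝ (Fin 4 → ℝ),
      Module.finrank ℝ H₁ = 3 ∧ Module.finrank ℝ H₂ = 3 ∧
      Q = (H₁ : Set (Fin 4 → ℝ)) ∪ (H₂ : Set (Fin 4 → ℝ)))
    (ℓ P₁ P₂ P₃ : Submodule ℝ (Fin 4 → ℝ))
    (hℓ : Module.finrank ℝ ℓ = 1)
    (hP₁ : Module.finrank ℝ P₁ = 2) (hP₂ : Module.finrank ℝ P₂ = 2)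
    (hP₃ : Module.finrank ℝ P₃ = 2)
    (hne₁₂ : P₁ ≠ P₂) (hne₁₃ : P₁ ≠ P₃) (hne₂₃ : P₂ ≠ P₃)
    (hℓ₁ : ℓ ≤ P₁) (hℓ₂ : ℓ ≤ P₂) (hℓ₃ : ℓ ≤ P₃)
    (hQ₁ : (P₁ : Set (Fin 4 → ℝ)) ⊆ Q) (hQ₂ : (P₂ : Set (Fin 4 → ℝ)) ⊆ Q)
    (hQ₃ : (P₃ : Set (Fin 4 → ℝ)) ⊆ Q) :
    ∀ P : Submodule ℝ (Fin 4 → ℝ), Module.finrank ℝ P = 2 →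
      (P : Set (Fin 4 → ℝ)) ⊆ Q → ℓ ≤ P := by
  set B := Matrix.toBilin' N
  have hB : B.IsSymm := isSymm_toBilin'_iff_isSymm.2 (isHermitian_iff_isSymm.1 hN)
  have hQB : Q = {x | B x x = 0} := by simp [hQ, B, toBilin'_apply']
  have hI : ∀ P : Submodule ℝ (Fin 4 → ℝ), (P : Set (Fin 4 → ℝ)) ⊆ Q →
      B.IsTotallyIsotropic P :=
    fun P hP => hB.isTotallyIsotropic_of_apply_self fun x hx => by simpa [hQB] using hP hx
  have hno : ∀ T : Submodule ℝ (Fin 4 → ℝ), finrank ℝ T = 3 → ¬ B.IsTotallyIsotropic T := by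
    intro T hT hIT
    rcases hIT.eq_zero_or_exists_setOf_apply_self_eq_union hB (by simp [hT])
      with hB0 | ⟨H, hH, hQH⟩
    · exact hN0 (toBilin'.injective (hB0.trans (map_zero _).symm))
    · exact hnot ⟨T, H, hT, by simpa using hH, hQB.trans hQH⟩
  have hrad : ∀ v ∈ ℓ, B v = 0 := fun v hv =>
    hB.apply_eq_zero_of_mem_three_planes (by simp) hno hℓ hP₁ hP₂ hP₃ hne₁₂ hne₁₃ hne₂₃
      hℓ₁ hℓ₂ hℓ₃ (hI _ hQ₁) (hI _ hQ₂) (hI _ hQ₃) hv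
  intro P hP hPQ
  by_contra hℓP
  refine hno (P ⊔ ℓ) ?_ ((hI P hPQ).sup hB ?_ ?_)
  · rw [finrank_sup_eq_add_one bot_le bot_le (by simp [hℓ]) hℓP, hP]
  · intro x hx y hy
    simp [hrad x hx]
  · intro x _ y hy
    rw [hB.eq, hrad y hy, LinearMap.zero_apply]
end

section
/- Let H be a 3-dimensional linear subspace of ℝ⁴, let P and R be distinct 2-dimensional linear subspaces of H, and let Q' be a homogeneous quadric in H containing P ∪ R with Q' ≠ H. Then Q' = P ∪ R. -/
/-!
Choose `u ∈ P \ R` and `w ∈ R \ P`. Since `P` and `R` are hyperplanes, every vector is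
`a • u + c • w + e` with `e ∈ P ⊓ R`, and because `q` vanishes on `P` and on `R`,
`q (a • u + c • w + e) = a * c * polar q u w`. As `q ≠ 0`, the constant `polar q u w` is nonzero,
so `q x = 0` exactly when `a = 0` (that is, `x ∈ R`) or `c = 0` (that is, `x ∈ P`).
-/

namespace QuadraticMap

variable {R M N : Type*} [CommRing R] [AddCommGroup M] [AddCommGroup N] [Module R M] [Module R N]

theorem polar_eq_zero_of_mem {Q : QuadraticMap R M N} {S : Submodule R M}
    (hQS : ∀ x ∈ S, Q x = 0) {x y : M} (hx : x ∈ S) (hy : y ∈ S) : polar Q x y = 0 := by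
  rw [polar, hQS _ (S.add_mem hx hy), hQS x hx, hQS y hy, sub_zero, sub_zero]

theorem apply_smul_add_smul_add_eq {Q : QuadraticMap R M N} {P S : Submodule R M}
    (hQP : ∀ x ∈ P, Q x = 0) (hQS : ∀ x ∈ S, Q x = 0) {u w e : M} (hu : u ∈ P) (hw : w ∈ S)
    (he : e ∈ P ⊓ S) (a c : R) : Q (a • u + c • w + e) = (a * c) • polar Q u w := by
  have hp : a • u + e ∈ P := P.add_mem (P.smul_mem a hu) he.1
  rw [add_right_comm, QuadraticMap.map_add Q, hQP _ hp, hQS _ (S.smul_mem c hw), polar_smul_right,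
    polar_add_left, polar_smul_left, polar_eq_zero_of_mem hQS he.2 hw, add_zero, zero_add,
    add_zero, smul_smul, mul_comm]

end QuadraticMap

namespace Submodule

variable {K V : Type*} [Field K] [AddCommGroup V] [Module K V]

theorem isCoatom_of_finrank_add_one_eq [FiniteDimensional K V] {P : Submodule K V}
    (hP : Module.finrank K P + 1 = Module.finrank K V) : IsCoatom P := by
  refine ⟨fun h => by rw [h, finrank_top] at hP; omega, fun S hPS => ?_⟩
  have := finrank_lt_finrank_of_lt hPS
  exact eq_top_of_finrank_eq (le_antisymm (finrank_le S) (by omega))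

theorem exists_smul_add_of_isCoatom {P : Submodule K V} (hP : IsCoatom P) {w : V} (hw : w ∉ P)
    (x : V) : ∃ c : K, ∃ p ∈ P, x = c • w + p := by
  have hx : x ∈ P ⊔ (K ∙ w) := by
    rw [(isCompl_span_singleton_of_isCoatom_of_notMem hP hw).sup_eq_top]; trivial
  obtain ⟨p, hp, _, hcw, rfl⟩ := mem_sup.mp hx
  obtain ⟨c, rfl⟩ := mem_span_singleton.mp hcw
  exact ⟨c, p, hp, add_comm _ _⟩

theorem exists_smul_add_smul_add_of_isCoatom {P S : Submodule K V} (hP : IsCoatom P)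
    (hS : IsCoatom S) {u w : V} (hu : u ∈ P) (huS : u ∉ S) (hwP : w ∉ P) (x : V) :
    ∃ a c : K, ∃ e ∈ P ⊓ S, x = a • u + c • w + e := by
  obtain ⟨c, p, hp, rfl⟩ := exists_smul_add_of_isCoatom hP hwP x
  obtain ⟨a, e, he, rfl⟩ := exists_smul_add_of_isCoatom hS huS p
  have heP : e ∈ P := by simpa using P.sub_mem hp (P.smul_mem a hu)
  exact ⟨a, c, e, ⟨heP, he⟩, by abel⟩

theorem smul_add_mem_iff {S : Submodule K V} {u y : V} (hu : u ∉ S) (hy : y ∈ S) (a : K) :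
    a • u + y ∈ S ↔ a = 0 := by
  rw [S.add_mem_iff_left hy]
  by_cases ha : a = 0
  · simp [ha]
  · simp [S.smul_mem_iff ha, hu, ha]

end Submodule

namespace QuadraticForm

variable {K V : Type*} [Field K] [AddCommGroup V] [Module K V]

theorem setOf_eq_zero_eq_union_of_isCoatom {q : QuadraticForm K V} (hq : q ≠ 0)
    {P S : Submodule K V} (hP : IsCoatom P) (hS : IsCoatom S) (hPS : P ≠ S)
    (hqP : ∀ x ∈ P, q x = 0) (hqS : ∀ x ∈ S, q x = 0) : {x | q x = 0} = (P : Set V) ∪ S := by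
  obtain ⟨u, hu, huS⟩ := SetLike.not_le_iff_exists.mp fun h =>
    hPS ((hP.le_iff.mp h).resolve_left hS.1).symm
  obtain ⟨w, hw, hwP⟩ := SetLike.not_le_iff_exists.mp fun h =>
    hPS ((hS.le_iff.mp h).resolve_left hP.1)
  have hq_apply (a c : K) {e : V} (he : e ∈ P ⊓ S) :
      q (a • u + c • w + e) = a * c * QuadraticMap.polar q u w :=
    QuadraticMap.apply_smul_add_smul_add_eq hqP hqS hu hw he a c
  have hpolar : QuadraticMap.polar q u w ≠ 0 := by
    refine fun h0 => hq (QuadraticMap.ext fun x => ?_)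
    obtain ⟨a, c, e, he, rfl⟩ := Submodule.exists_smul_add_smul_add_of_isCoatom hP hS hu huS hwP x
    simp [hq_apply a c he, h0]
  ext x
  obtain ⟨a, c, e, he, rfl⟩ := Submodule.exists_smul_add_smul_add_of_isCoatom hP hS hu huS hwP x
  have hmemS : a • u + c • w + e ∈ S ↔ a = 0 := by
    rw [add_assoc]
    exact Submodule.smul_add_mem_iff huS (S.add_mem (S.smul_mem c hw) he.2) a
  have hmemP : a • u + c • w + e ∈ P ↔ c = 0 := by
    rw [add_comm (a • u), add_assoc]
    exact Submodule.smul_add_mem_iff hwP (P.add_mem (P.smul_mem a hu) he.1) c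
  simp [hq_apply a c he, hpolar, hmemS, hmemP, or_comm]

end QuadraticForm

theorem stmt_5_general {H : Type*} [AddCommGroup H] [Module ℝ H]
    (hdim : Module.finrank ℝ H = 3)
    (P R : Submodule ℝ H)
    (hP : Module.finrank ℝ P = 2) (hR : Module.finrank ℝ R = 2) (hPR : P ≠ R)
    (q : QuadraticForm ℝ H) (hq : q ≠ 0)
    (Q' : Set H) (hQ' : Q' = {x : H | q x = 0})
    (hsub : (P : Set H) ∪ (R : Set H) ⊆ Q') :
    Q' = (P : Set H) ∪ (R : Set H) := by
  have : FiniteDimensional ℝ H := Module.finite_of_finrank_pos (by omega)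
  have hPc : IsCoatom P := Submodule.isCoatom_of_finrank_add_one_eq (by omega)
  have hRc : IsCoatom R := Submodule.isCoatom_of_finrank_add_one_eq (by omega)
  subst hQ'
  exact QuadraticForm.setOf_eq_zero_eq_union_of_isCoatom hq hPc hRc hPR
    (fun x hx => hsub (Or.inl hx)) (fun x hx => hsub (Or.inr hx))

/-- Let `H` be a 3-dimensional real vector space, `P ≠ R` two 2-dimensional subspaces, and
`Q'` a homogeneous quadric in `H` (zero set of a nonzero quadratic form) containing
`P ∪ R` with `Q' ≠ H`. Then `Q' = P ∪ R`. -/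
theorem stmt_5 {H : Type*} [AddCommGroup H] [Module ℝ H]
    (hdim : Module.finrank ℝ H = 3)
    (P R : Submodule ℝ H)
    (hP : Module.finrank ℝ P = 2) (hR : Module.finrank ℝ R = 2) (hPR : P ≠ R)
    (q : QuadraticForm ℝ H) (hq : q ≠ 0)
    (Q' : Set H) (hQ' : Q' = {x : H | q x = 0})
    (hsub : (P : Set H) ∪ (R : Set H) ⊆ Q') (hne : Q' ≠ Set.univ) :
    Q' = (P : Set H) ∪ (R : Set H) :=
  stmt_5_general hdim P R hP hR hPR q hq Q' hQ' hsub
end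

section
/- Let C be a circuit (cycle graph) with vertex set V(C), and let u : V(C) → ℝ² \ {0} be such that for any path i–j–k of two incident edges in C, the vectors u_i and u_k lie strictly on opposite sides of the line spanned by u_j (equivalently det(u_i,u_j) and det(u_k,u_j) have opposite signs). Then there exists a well-signed C-matrix A (symmetric, A_{ij} < 0 for edges ij, A_{ij} = 0 for distinct nonadjacent i,j) with at least one negative eigenvalue such that the two coordinate functions i ↦ (u_i)₁ and i ↦ (u_i)₂ lie in ker(A). -/
open Matrix

/-! On an edge `ij` put `A i j = -|det (u i, u j)|⁻¹`. At a vertex `i` with neighbours `a, b`,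
`det (∑ₖ A i k • u k, u i) = -(sign det (u a, u i) + sign det (u b, u i)) = 0`, so the off-diagonal
part of row `i` maps `u` to a multiple of `u i`, and a diagonal entry cancels it.

If `A` had no negative eigenvalue it would be positive semidefinite; its off-diagonal entries being
nonpositive, `|z| ⬝ A |z| ≤ z ⬝ A z = 0` for the kernel vector `z = det (·, u i)`, whence `A |z| = 0`.
But row `i` of `A |z|` is a sum of nonpositive terms (`z i = 0`) containing the negative term
`A i j * |z j|` for a neighbour `j` of `i`. -/

namespace Matrix

variable {ι : Type*} [Fintype ι]

lemma abs_dotProduct_mulVec_abs_le {R : Type*} [CommRing R] [LinearOrder R]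
    [IsStrictOrderedRing R] {A : Matrix ι ι R} (hA : ∀ i j, i ≠ j → A i j ≤ 0) (z : ι → R) :
    |z| ⬝ᵥ A *ᵥ |z| ≤ z ⬝ᵥ A *ᵥ z := by
  simp only [dotProduct, mulVec, Finset.mul_sum, Pi.abs_apply]
  refine Finset.sum_le_sum fun i _ => Finset.sum_le_sum fun j _ => ?_
  obtain rfl | hij := eq_or_ne i j
  · rw [mul_left_comm, abs_mul_abs_self, mul_left_comm]
  · calc |z i| * (A i j * |z j|) = A i j * |z i * z j| := by rw [abs_mul]; ring
      _ ≤ A i j * (z i * z j) := mul_le_mul_of_nonpos_left (le_abs_self _) (hA i j hij)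
      _ = z i * (A i j * z j) := by ring

lemma PosSemidef.mulVec_abs_eq_zero {A : Matrix ι ι ℝ} (hA : A.PosSemidef)
    (hoff : ∀ i j, i ≠ j → A i j ≤ 0) {z : ι → ℝ} (hz : A *ᵥ z = 0) : A *ᵥ |z| = 0 := by
  refine (hA.dotProduct_mulVec_zero_iff |z|).mp (le_antisymm ?_ ?_)
  · simpa [hz] using abs_dotProduct_mulVec_abs_le hoff z
  · simpa using hA.dotProduct_mulVec_nonneg |z|

lemma IsHermitian.exists_eigenvalues_neg [DecidableEq ι] {A : Matrix ι ι ℝ} (hA : A.IsHermitian)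
    (hoff : ∀ i j, i ≠ j → A i j ≤ 0) {z : ι → ℝ} (hz : A *ᵥ z = 0) {i j : ι} (hzi : z i = 0)
    (hzj : z j ≠ 0) (hij : A i j ≠ 0) : ∃ k, hA.eigenvalues k < 0 := by
  by_contra! hneg
  have hrow : ∑ k, A i k * |z k| = 0 := by
    simpa [mulVec, dotProduct] using
      congrFun ((hA.posSemidef_iff_eigenvalues_nonneg.mpr hneg).mulVec_abs_eq_zero hoff hz) i
  have hterm_nonpos : ∀ k ∈ Finset.univ, A i k * |z k| ≤ 0 := by
    intro k _
    obtain rfl | hik := eq_or_ne i k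
    · simp [hzi]
    · exact mul_nonpos_of_nonpos_of_nonneg (hoff i k hik) (abs_nonneg _)
  have := (Finset.sum_eq_zero_iff_of_nonpos hterm_nonpos).mp hrow j (Finset.mem_univ j)
  exact mul_ne_zero hij (abs_ne_zero.mpr hzj) this

lemma sub_diagonal_mulVec_eq_zero {κ R : Type*} [DecidableEq ι] [CommRing R] {W : Matrix ι ι R}
    {u : ι → κ → R} {c : ι → R} (h : ∀ i, ∑ j, W i j • u j = c i • u i) (k : κ) :
    (W - diagonal c) *ᵥ (fun i => u i k) = 0 := by
  ext i
  have := congrFun (h i) k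
  simp only [Finset.sum_apply, Pi.smul_apply, smul_eq_mul] at this
  rw [Pi.zero_apply, sub_mulVec, Pi.sub_apply, mulVec_diagonal, ← this, sub_eq_zero]
  rfl

end Matrix

def det2 (x y : Fin 2 → ℝ) : ℝ := x 0 * y 1 - x 1 * y 0

lemma det2_swap (x y : Fin 2 → ℝ) : det2 y x = -det2 x y := by
  unfold det2; ring

lemma det2_self (x : Fin 2 → ℝ) : det2 x x = 0 := by
  unfold det2; ring

lemma det2_sum_smul_left {ι : Type*} (s : Finset ι) (c : ι → ℝ) (x : ι → Fin 2 → ℝ)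
    (y : Fin 2 → ℝ) : det2 (∑ j ∈ s, c j • x j) y = ∑ j ∈ s, c j * det2 (x j) y := by
  simp only [det2, Finset.sum_apply, Pi.smul_apply, smul_eq_mul, Finset.sum_mul,
    ← Finset.sum_sub_distrib]
  exact Finset.sum_congr rfl fun j _ => by ring

lemma exists_smul_eq_of_det2_eq_zero {x y : Fin 2 → ℝ} (hy : y ≠ 0) (h : det2 x y = 0) :
    ∃ c : ℝ, x = c • y := by
  have hy' : y 0 ^ 2 + y 1 ^ 2 ≠ 0 := by
    contrapose! hy
    ext k
    fin_cases k <;> simp <;> nlinarith [sq_nonneg (y 0), sq_nonneg (y 1)]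
  refine ⟨(x 0 * y 0 + x 1 * y 1) / (y 0 ^ 2 + y 1 ^ 2), ?_⟩
  unfold det2 at h
  ext k
  fin_cases k <;> simp <;> field_simp
  · linear_combination y 1 * h
  · linear_combination -y 0 * h

lemma mulVec_det2_eq_zero {ι : Type*} [Fintype ι] {A : Matrix ι ι ℝ} {u : ι → Fin 2 → ℝ}
    (h₀ : A *ᵥ (fun i => u i 0) = 0) (h₁ : A *ᵥ (fun i => u i 1) = 0) (y : Fin 2 → ℝ) :
    A *ᵥ (fun i => det2 (u i) y) = 0 := by
  have : (fun i => det2 (u i) y) = y 1 • (fun i => u i 0) - y 0 • (fun i => u i 1) := by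
    ext i; simp only [det2, Pi.sub_apply, Pi.smul_apply, smul_eq_mul]; ring
  rw [this, mulVec_sub, mulVec_smul, mulVec_smul, h₀, h₁, smul_zero, smul_zero, sub_zero]

lemma inv_abs_mul_add_inv_abs_mul_of_mul_neg {K : Type*} [Field K] [LinearOrder K]
    [IsStrictOrderedRing K] {a b : K} (h : a * b < 0) : |a|⁻¹ * a + |b|⁻¹ * b = 0 := by
  rcases mul_neg_iff.mp h with ⟨ha, hb⟩ | ⟨ha, hb⟩
  · rw [abs_of_pos ha, abs_of_neg hb, inv_mul_cancel₀ ha.ne', inv_neg, neg_mul,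
      inv_mul_cancel₀ hb.ne, add_neg_cancel]
  · rw [abs_of_neg ha, abs_of_pos hb, inv_mul_cancel₀ hb.ne', inv_neg, neg_mul,
      inv_mul_cancel₀ ha.ne, neg_add_cancel]

namespace SimpleGraph

variable {V : Type*} (G : SimpleGraph V) [DecidableRel G.Adj]

def NeighborsOnOppositeSides (u : V → Fin 2 → ℝ) : Prop :=
  ∀ i j k, G.Adj i j → G.Adj j k → i ≠ k → det2 (u i) (u j) * det2 (u k) (u j) < 0

noncomputable def detWeightMatrix (u : V → Fin 2 → ℝ) : Matrix V V ℝ :=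
  of fun i j => if G.Adj i j then -|det2 (u i) (u j)|⁻¹ else 0

variable {G} {u : V → Fin 2 → ℝ}

lemma detWeightMatrix_isSymm : (G.detWeightMatrix u).IsSymm := by
  ext i j
  simp [detWeightMatrix, G.adj_comm, det2_swap (u i) (u j)]

lemma detWeightMatrix_nonpos (i j : V) : G.detWeightMatrix u i j ≤ 0 := by
  simp only [detWeightMatrix, of_apply]
  split_ifs <;> simp

lemma detWeightMatrix_neg_of_adj {i j : V} (hij : G.Adj i j) (hd : det2 (u i) (u j) ≠ 0) :
    G.detWeightMatrix u i j < 0 := by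
  simpa [detWeightMatrix, hij] using hd

lemma detWeightMatrix_eq_zero_of_not_adj {i j : V} (hij : ¬G.Adj i j) :
    G.detWeightMatrix u i j = 0 := by
  simp [detWeightMatrix, hij]

variable [Fintype V]

lemma NeighborsOnOppositeSides.det2_ne_zero (hu : G.NeighborsOnOppositeSides u)
    (hG : G.IsRegularOfDegree 2) {i j : V} (hij : G.Adj i j) : det2 (u i) (u j) ≠ 0 := by
  have hcard : 1 < (G.neighborFinset j).card := by
    rw [card_neighborFinset_eq_degree, hG j]; norm_num
  obtain ⟨k, hk, hki⟩ := Finset.exists_mem_ne hcard i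
  exact left_ne_zero_of_mul (hu i j k hij ((G.mem_neighborFinset j k).mp hk) hki.symm).ne

lemma NeighborsOnOppositeSides.det2_sum_detWeightMatrix_smul [DecidableEq V]
    (hu : G.NeighborsOnOppositeSides u)
    (hG : G.IsRegularOfDegree 2) (i : V) :
    det2 (∑ j, G.detWeightMatrix u i j • u j) (u i) = 0 := by
  have hrow : ∀ j, G.detWeightMatrix u i j * det2 (u j) (u i) =
      if G.Adj i j then -(|det2 (u j) (u i)|⁻¹ * det2 (u j) (u i)) else 0 := by
    intro j
    simp only [detWeightMatrix, of_apply, det2_swap (u j) (u i), abs_neg]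
    split_ifs <;> ring
  obtain ⟨a, b, hab, hN⟩ := Finset.card_eq_two.mp (hG i)
  have ha : G.Adj i a := (G.mem_neighborFinset i a).mp (hN ▸ Finset.mem_insert_self a {b})
  have hb : G.Adj i b := (G.mem_neighborFinset i b).mp (hN ▸ Finset.mem_insert_of_mem
    (Finset.mem_singleton_self b))
  rw [det2_sum_smul_left, Finset.sum_congr rfl fun j _ => hrow j, ← Finset.sum_filter,
    ← neighborFinset_eq_filter, hN, Finset.sum_pair hab, ← neg_add,
    inv_abs_mul_add_inv_abs_mul_of_mul_neg (hu a i b ha.symm hb hab), neg_zero]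

theorem NeighborsOnOppositeSides.exists_wellSigned_matrix [DecidableEq V] [Nonempty V]
    (hu : G.NeighborsOnOppositeSides u) (hG : G.IsRegularOfDegree 2) (hu₀ : ∀ i, u i ≠ 0) :
    ∃ A : Matrix V V ℝ, ∃ hA : A.IsHermitian,
      (∀ i j, i ≠ j → (G.Adj i j → A i j < 0) ∧ (¬G.Adj i j → A i j = 0)) ∧
      (∃ i, hA.eigenvalues i < 0) ∧
      A *ᵥ (fun i => u i 0) = 0 ∧ A *ᵥ (fun i => u i 1) = 0 := by
  choose c hc using fun i =>
    exists_smul_eq_of_det2_eq_zero (hu₀ i) (hu.det2_sum_detWeightMatrix_smul hG i)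
  set A := G.detWeightMatrix u - diagonal c
  have hA : A.IsHermitian :=
    isHermitian_iff_isSymm.mpr (detWeightMatrix_isSymm.sub (isSymm_diagonal c))
  have hoff : ∀ i j, i ≠ j → A i j = G.detWeightMatrix u i j := fun i j hij => by
    simp [A, hij]
  have hker := sub_diagonal_mulVec_eq_zero hc
  obtain ⟨i⟩ := ‹Nonempty V›
  obtain ⟨j, hj⟩ : ∃ j, j ∈ G.neighborFinset i :=
    Finset.card_pos.mp (by rw [card_neighborFinset_eq_degree, hG i]; norm_num)
  rw [mem_neighborFinset] at hj
  refine ⟨A, hA, fun i j hij => ?_, ?_, hker 0, hker 1⟩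
  · rw [hoff i j hij]
    exact ⟨fun h => detWeightMatrix_neg_of_adj h (hu.det2_ne_zero hG h),
      detWeightMatrix_eq_zero_of_not_adj⟩
  · refine hA.exists_eigenvalues_neg (fun k l hkl => (hoff k l hkl).trans_le
      (detWeightMatrix_nonpos k l)) (mulVec_det2_eq_zero (hker 0) (hker 1) (u i))
      (det2_self (u i)) (hu.det2_ne_zero hG hj.symm) ?_
    rw [hoff i j hj.ne]
    exact (detWeightMatrix_neg_of_adj hj (hu.det2_ne_zero hG hj)).ne

end SimpleGraph

/-- For a cycle `C` and `u : V(C) → ℝ² \ {0}` such that for any two incident edges `ij`, `jk`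
the vectors `u i` and `u k` are strictly on opposite sides of the line spanned by `u j`,
there exists a well-signed `C`-matrix `A` with at least one negative eigenvalue whose kernel
contains both coordinate functions of `u`. -/
theorem stmt_8 {n : ℕ} (hn : 3 ≤ n) (u : Fin n → Fin 2 → ℝ) (hu : ∀ i, u i ≠ 0)
    (hdet : ∀ i j k : Fin n, (SimpleGraph.cycleGraph n).Adj i j →
      (SimpleGraph.cycleGraph n).Adj j k → i ≠ k →
      (u i 0 * u j 1 - u i 1 * u j 0) * (u k 0 * u j 1 - u k 1 * u j 0) < 0) :
    ∃ A : Matrix (Fin n) (Fin n) ℝ, ∃ hA : A.IsHermitian,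
      (∀ i j : Fin n, i ≠ j →
        ((SimpleGraph.cycleGraph n).Adj i j → A i j < 0) ∧
        (¬ (SimpleGraph.cycleGraph n).Adj i j → A i j = 0)) ∧
      (∃ i : Fin n, hA.eigenvalues i < 0) ∧
      A.mulVec (fun i => u i 0) = 0 ∧ A.mulVec (fun i => u i 1) = 0 := by
  obtain ⟨m, rfl⟩ : ∃ m, n = m + 3 := ⟨n - 3, by omega⟩
  exact SimpleGraph.NeighborsOnOppositeSides.exists_wellSigned_matrix hdet
    (fun _ => SimpleGraph.cycleGraph_degree_three_le) hu
end

section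
/- Let G be a connected graph and M a well-signed G-matrix with exactly one negative eigenvalue and corank d ≥ 2, where d equals the maximum corank κ(G) of any well-signed G-matrix with one negative eigenvalue. Let G' be a spanning subgraph of G and A a well-signed G'-matrix with ker(M) ⊆ ker(A). Then A has at most one negative eigenvalue. -/
open Matrix

/-- `M` is a well-signed `G`-matrix: negative on edges, zero on distinct non-adjacent pairs. -/
def WellSigned {V : Type*} (G : SimpleGraph V) (M : Matrix V V ℝ) : Prop :=
  ∀ i j : V, i ≠ j → (G.Adj i j → M i j < 0) ∧ (¬ G.Adj i j → M i j = 0)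

/-- The number of negative eigenvalues of a real symmetric matrix (0 if not symmetric). -/
noncomputable def negEig {V : Type*} [Fintype V] [DecidableEq V] (X : Matrix V V ℝ) : ℕ :=
  if h : X.IsHermitian then Fintype.card {i // h.eigenvalues i < 0} else 0

/-- The corank (nullity) of a matrix. -/
noncomputable def corank {V : Type*} [Fintype V] [DecidableEq V] (X : Matrix V V ℝ) : ℕ :=
  Module.finrank ℝ (LinearMap.ker X.mulVecLin)

/-!
Interpolate `B t = (1 - t) • M + t • A`. For `t < 1` the matrix `B t` is still a well-signed
`G`-matrix (every edge of `G` keeps a strictly negative contribution from `M`), and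
`ker M ⊆ ker (B t)` gives `corank (B t) ≥ d ≥ 2`. A positive semidefinite well-signed matrix of a
connected graph has corank at most one (a kernel vector may be replaced by its absolute value,
and then it vanishes nowhere or everywhere), so `B t` has a negative eigenvalue.

Under small symmetric perturbations the number of negative eigenvalues cannot drop and
`negEig + corank` cannot grow, since a subspace on which the quadratic form is negative (resp.
positive) definite stays so. Together with the maximality `corank ≤ d` this makes
`{t ∈ [0, 1) | negEig (B t) = 1}` open and closed in `[0, 1)`, hence all of it, and letting
`t → 1` gives `negEig A ≤ 1`.
-/

open Module Filter Topology Set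

namespace Matrix

lemma abs_dotProduct_mulVec_le {V : Type*} [Fintype V] (N : Matrix V V ℝ) (x : V → ℝ) :
    |x ⬝ᵥ N *ᵥ x| ≤ (∑ i, ∑ j, |N i j|) * (x ⬝ᵥ x) := by
  have hsq (i : V) : x i ^ 2 ≤ x ⬝ᵥ x := by
    simpa [sq, dotProduct] using
      Finset.single_le_sum (fun k _ => mul_self_nonneg (x k)) (Finset.mem_univ i)
  have hprod (i j : V) : |x i| * |x j| ≤ x ⬝ᵥ x := by
    nlinarith [hsq i, hsq j, sq_abs (x i), sq_abs (x j), sq_nonneg (|x i| - |x j|)]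
  calc |x ⬝ᵥ N *ᵥ x| = |∑ i, ∑ j, N i j * (x i * x j)| := by
        simp only [dotProduct, mulVec, Finset.mul_sum]
        congr 1; refine Finset.sum_congr rfl fun i _ => Finset.sum_congr rfl fun j _ => by ring
    _ ≤ ∑ i, ∑ j, |N i j| * (|x i| * |x j|) := by
        refine (Finset.abs_sum_le_sum_abs _ _).trans (Finset.sum_le_sum fun i _ => ?_)
        refine (Finset.abs_sum_le_sum_abs _ _).trans_eq ?_
        simp only [abs_mul]
    _ ≤ (∑ i, ∑ j, |N i j|) * (x ⬝ᵥ x) := by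
        simp only [Finset.sum_mul]
        gcongr with i _ j _
        exact hprod i j

end Matrix

namespace Matrix.IsHermitian

variable {V : Type*} [Fintype V] [DecidableEq V] {X : Matrix V V ℝ} (hX : X.IsHermitian)

noncomputable def eigenCoords : (V → ℝ) ≃ₗ[ℝ] V → ℝ :=
  UnitaryGroup.toLinearEquiv (star hX.eigenvectorUnitary)

lemma eigenCoords_apply (x : V → ℝ) :
    hX.eigenCoords x = (hX.eigenvectorUnitary : Matrix V V ℝ)ᵀ *ᵥ x :=
  rfl

lemma sum_eigenCoords_sq (x : V → ℝ) : ∑ i, hX.eigenCoords x i ^ 2 = x ⬝ᵥ x := by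
  have hU := Unitary.coe_mul_star_self hX.eigenvectorUnitary
  rw [Unitary.coe_star, star_eq_conjTranspose, conjTranspose_eq_transpose_of_trivial] at hU
  simp only [sq, ← dotProduct.eq_1, eigenCoords_apply]
  rw [mulVec_transpose, ← dotProduct_mulVec, ← mulVec_transpose, mulVec_mulVec, hU, one_mulVec]

lemma dotProduct_mulVec_eq_sum_eigenvalues (x : V → ℝ) :
    x ⬝ᵥ X *ᵥ x = ∑ i, hX.eigenvalues i * hX.eigenCoords x i ^ 2 := by
  conv_lhs => rw [hX.spectral_theorem, Unitary.conjStarAlgAut_apply]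
  simp only [star_eq_conjTranspose, conjTranspose_eq_transpose_of_trivial, ← mulVec_mulVec,
    dotProduct_mulVec _ (hX.eigenvectorUnitary : Matrix V V ℝ), ← mulVec_transpose,
    ← hX.eigenCoords_apply]
  simp [dotProduct, mulVec_diagonal, sq, mul_left_comm]

/-- The span of the eigenvectors of `X` whose indices satisfy `p`. -/
noncomputable def spectralSubspace (p : V → Prop) : Submodule ℝ (V → ℝ) :=
  LinearMap.ker
    (LinearMap.funLeft ℝ ℝ (Subtype.val : {i // ¬ p i} → V) ∘ₗ hX.eigenCoords.toLinearMap)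

lemma mem_spectralSubspace {p : V → Prop} {x : V → ℝ} :
    x ∈ hX.spectralSubspace p ↔ ∀ i, ¬ p i → hX.eigenCoords x i = 0 := by
  simp [spectralSubspace, funext_iff, LinearMap.funLeft]

lemma finrank_spectralSubspace (p : V → Prop) [DecidablePred p] :
    finrank ℝ (hX.spectralSubspace p) = Fintype.card {i // p i} := by
  set f := LinearMap.funLeft ℝ ℝ (Subtype.val : {i // ¬ p i} → V) ∘ₗ hX.eigenCoords.toLinearMap
  have hsurj : Function.Surjective f := by
    rw [LinearMap.coe_comp]
    exact (LinearMap.funLeft_surjective_of_injective ℝ ℝ _ Subtype.val_injective).comp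
      hX.eigenCoords.surjective
  have := LinearMap.finrank_range_add_finrank_ker f
  rw [LinearMap.range_eq_top.2 hsurj, finrank_top, finrank_pi, finrank_pi,
    Fintype.card_subtype_compl] at this
  have := Fintype.card_subtype_le p
  change finrank ℝ (LinearMap.ker f) = _
  omega

-- `σ = -1` and `σ = 1` give the bounds for negative and positive definite subspaces.
lemma finrank_le_card_of_forall_pos (σ : ℝ) (W : Submodule ℝ (V → ℝ))
    (hW : ∀ x ∈ W, x ≠ 0 → 0 < σ * (x ⬝ᵥ X *ᵥ x)) :
    finrank ℝ W ≤ Fintype.card {i // 0 < σ * hX.eigenvalues i} := by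
  classical
  have hdisj : Disjoint W (hX.spectralSubspace fun i => ¬ 0 < σ * hX.eigenvalues i) := by
    refine Submodule.disjoint_def.2 fun x hxW hxE =>
      by_contra fun hx0 => (hW x hxW hx0).not_ge ?_
    rw [hX.dotProduct_mulVec_eq_sum_eigenvalues, Finset.mul_sum]
    refine Finset.sum_nonpos fun i _ => ?_
    by_cases hi : 0 < σ * hX.eigenvalues i
    · simp [(hX.mem_spectralSubspace).1 hxE i (not_not.2 hi)]
    · rw [← mul_assoc]
      exact mul_nonpos_of_nonpos_of_nonneg (not_lt.1 hi) (sq_nonneg _)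
  have := Submodule.finrank_add_finrank_le_of_disjoint hdisj
  rw [hX.finrank_spectralSubspace, finrank_pi, Fintype.card_subtype_compl] at this
  have := Fintype.card_subtype_le fun i => 0 < σ * hX.eigenvalues i
  omega

lemma exists_pos_le_dotProduct_mulVec (σ : ℝ) :
    ∃ ε > 0, ∀ x ∈ hX.spectralSubspace (fun i => 0 < σ * hX.eigenvalues i),
      ε * (x ⬝ᵥ x) ≤ σ * (x ⬝ᵥ X *ᵥ x) := by
  have hε : ∀ᶠ ε in 𝓝[>] (0 : ℝ),
      0 < ε ∧ ∀ i, 0 < σ * hX.eigenvalues i → ε ≤ σ * hX.eigenvalues i := by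
    refine eventually_mem_nhdsWithin.and (eventually_all.2 fun i => ?_)
    by_cases hi : 0 < σ * hX.eigenvalues i
    · exact ((eventually_le_nhds hi).filter_mono nhdsWithin_le_nhds).mono fun _ h _ => h
    · exact .of_forall fun _ h => absurd h hi
  obtain ⟨ε, hε0, hεle⟩ := hε.exists
  refine ⟨ε, hε0, fun x hx => ?_⟩
  rw [← hX.sum_eigenCoords_sq, hX.dotProduct_mulVec_eq_sum_eigenvalues, Finset.mul_sum,
    Finset.mul_sum]
  refine Finset.sum_le_sum fun i _ => ?_
  by_cases hi : 0 < σ * hX.eigenvalues i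
  · rw [← mul_assoc]
    exact mul_le_mul_of_nonneg_right (hεle i hi) (sq_nonneg _)
  · simp [(hX.mem_spectralSubspace).1 hx i hi]


lemma eventually_card_pos_le (σ : ℝ) (hσ : |σ| ≤ 1) :
    ∀ᶠ Y in 𝓝 X, ∀ hY : Y.IsHermitian,
      Fintype.card {i // 0 < σ * hX.eigenvalues i} ≤
        Fintype.card {i // 0 < σ * hY.eigenvalues i} := by
  obtain ⟨ε, hε, hXε⟩ := hX.exists_pos_le_dotProduct_mulVec σ
  have hclose : ∀ᶠ Y in 𝓝 X, ∑ i, ∑ j, |(Y - X) i j| < ε := by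
    have hc : Continuous fun Y : Matrix V V ℝ => ∑ i, ∑ j, |(Y - X) i j| := by fun_prop
    exact hc.continuousAt.eventually_lt continuousAt_const (by simpa using hε)
  filter_upwards [hclose] with Y hYX hY
  rw [← hX.finrank_spectralSubspace]
  refine hY.finrank_le_card_of_forall_pos σ _ fun x hx hx0 => ?_
  have hxx : 0 < x ⬝ᵥ x := by simpa using dotProduct_star_self_pos_iff.2 hx0
  have hdiff : |σ * (x ⬝ᵥ (Y - X) *ᵥ x)| ≤ (∑ i, ∑ j, |(Y - X) i j|) * (x ⬝ᵥ x) := by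
    rw [abs_mul]
    exact (mul_le_of_le_one_left (abs_nonneg _) hσ).trans (abs_dotProduct_mulVec_le _ x)
  have hsplit : x ⬝ᵥ Y *ᵥ x = x ⬝ᵥ X *ᵥ x + x ⬝ᵥ (Y - X) *ᵥ x := by
    rw [sub_mulVec, dotProduct_sub]; ring
  rw [hsplit, mul_add]
  nlinarith [hXε x hx, neg_abs_le (σ * (x ⬝ᵥ (Y - X) *ᵥ x))]

lemma negEig_add_corank_add_card_pos :
    negEig X + corank X + Fintype.card {i // 0 < hX.eigenvalues i} = Fintype.card V := by
  have hrank : X.rank + corank X = Fintype.card V := by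
    simpa [Matrix.rank, corank] using LinearMap.finrank_range_add_finrank_ker X.mulVecLin
  have hne : Fintype.card {i // hX.eigenvalues i ≠ 0} =
      Fintype.card {i // hX.eigenvalues i < 0} + Fintype.card {i // 0 < hX.eigenvalues i} := by
    rw [← Fintype.card_subtype_or_disjoint _ _ fun p hneg hpos i hi => ?_]
    · exact Fintype.card_congr (Equiv.subtypeEquivRight fun i => ne_iff_lt_or_gt)
    · exact ((hneg i hi).trans (hpos i hi)).false
  rw [hX.rank_eq_card_non_zero_eigs, hne] at hrank
  rw [negEig, dif_pos hX]
  omega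

theorem eventually_negEig_le {X : Matrix V V ℝ} (hX : X.IsHermitian) :
    ∀ᶠ Y in 𝓝 X, Y.IsHermitian →
      negEig X ≤ negEig Y ∧ negEig Y + corank Y ≤ negEig X + corank X := by
  filter_upwards [hX.eventually_card_pos_le (-1) (by simp), hX.eventually_card_pos_le 1 (by simp)]
    with Y hneg hpos hY
  simp only [neg_mul, one_mul, neg_pos] at hneg hpos
  have := hneg hY
  have := hpos hY
  have := hX.negEig_add_corank_add_card_pos
  have := hY.negEig_add_corank_add_card_pos
  rw [negEig, dif_pos hX, negEig, dif_pos hY] at *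
  omega

end Matrix.IsHermitian

namespace WellSigned

variable {V : Type*} {G : SimpleGraph V} {X : Matrix V V ℝ}

lemma apply_nonpos (h : WellSigned G X) {i j : V} (hij : i ≠ j) : X i j ≤ 0 := by
  by_cases hadj : G.Adj i j
  · exact ((h i j hij).1 hadj).le
  · exact ((h i j hij).2 hadj).le

lemma one_sub_smul_add_smul {G' : SimpleGraph V} {A : Matrix V V ℝ} (h : WellSigned G X)
    (hA : WellSigned G' A) (hG' : G' ≤ G) {t : ℝ} (ht0 : 0 ≤ t) (ht1 : t < 1) :
    WellSigned G ((1 - t) • X + t • A) := by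
  intro i j hij
  simp only [Matrix.add_apply, Matrix.smul_apply, smul_eq_mul]
  refine ⟨fun hadj => ?_, fun hadj => ?_⟩
  · nlinarith [(h i j hij).1 hadj, hA.apply_nonpos hij]
  · rw [(h i j hij).2 hadj, (hA i j hij).2 fun h => hadj (hG' h)]
    ring

variable [Fintype V]

lemma mulVec_abs_eq_zero (h : WellSigned G X) (hpsd : X.PosSemidef) {x : V → ℝ}
    (hx : X *ᵥ x = 0) : X *ᵥ |x| = 0 := by
  -- the off-diagonal entries are `≤ 0`, so passing to `|x|` can only lower the quadratic form
  have hle : |x| ⬝ᵥ X *ᵥ |x| ≤ x ⬝ᵥ X *ᵥ x := by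
    simp only [dotProduct, mulVec, Finset.mul_sum, Pi.abs_apply]
    refine Finset.sum_le_sum fun i _ => Finset.sum_le_sum fun j _ => ?_
    rcases eq_or_ne i j with rfl | hij
    · exact le_of_eq (by linear_combination X i i * abs_mul_abs_self (x i))
    · have := mul_le_mul_of_nonpos_left (le_abs_self (x i * x j)) (h.apply_nonpos hij)
      rw [abs_mul] at this
      linarith
  rw [hx, dotProduct_zero] at hle
  exact (hpsd.dotProduct_mulVec_zero_iff _).1 <| by
    simpa using le_antisymm hle (by simpa using hpsd.dotProduct_mulVec_nonneg |x|)

lemma apply_eq_zero_of_adj (h : WellSigned G X) (hpsd : X.PosSemidef) {x : V → ℝ}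
    (hx : X *ᵥ x = 0) {k j : V} (hk : x k = 0) (hadj : G.Adj k j) : x j = 0 := by
  have hrow : ∑ m, X k m * |x m| = 0 := by
    simpa [mulVec, dotProduct] using congrFun (h.mulVec_abs_eq_zero hpsd hx) k
  have hterms : ∀ m ∈ Finset.univ, X k m * |x m| ≤ 0 := fun m _ => by
    rcases eq_or_ne k m with rfl | hkm
    · simp [hk]
    · exact mul_nonpos_of_nonpos_of_nonneg (h.apply_nonpos hkm) (abs_nonneg _)
  have hj := (Finset.sum_eq_zero_iff_of_nonpos hterms).1 hrow j (Finset.mem_univ j)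
  have hXkj : X k j ≠ 0 := ((h k j hadj.ne).1 hadj).ne
  simpa [hXkj] using hj

lemma eq_zero_of_mulVec_eq_zero (hG : G.Connected) (h : WellSigned G X) (hpsd : X.PosSemidef)
    {x : V → ℝ} (hx : X *ᵥ x = 0) {i : V} (hi : x i = 0) : x = 0 := by
  funext j
  obtain ⟨p⟩ := hG.preconnected i j
  induction p with
  | nil => exact hi
  | cons hadj _ ih => exact ih (h.apply_eq_zero_of_adj hpsd hx hi hadj)

variable [DecidableEq V]

lemma corank_le_one (hG : G.Connected) (h : WellSigned G X) (hpsd : X.PosSemidef) :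
    corank X ≤ 1 := by
  obtain ⟨i⟩ := hG.nonempty
  have hinj : Function.Injective ((LinearMap.proj i : (V → ℝ) →ₗ[ℝ] ℝ) ∘ₗ
      (LinearMap.ker X.mulVecLin).subtype) := by
    rw [← LinearMap.ker_eq_bot, LinearMap.ker_eq_bot']
    rintro ⟨x, hx⟩ hxi
    exact Subtype.ext (h.eq_zero_of_mulVec_eq_zero hG hpsd hx hxi)
  simpa [corank] using LinearMap.finrank_le_finrank_of_injective hinj

lemma one_le_negEig (hG : G.Connected) (h : WellSigned G X) (hX : X.IsHermitian)
    (hcor : 2 ≤ corank X) : 1 ≤ negEig X := by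
  by_contra! hneg
  have hpsd : X.PosSemidef := hX.posSemidef_iff_eigenvalues_nonneg.2 fun i => by
    by_contra! hi
    rw [negEig, dif_pos hX, Nat.lt_one_iff, Fintype.card_eq_zero_iff] at hneg
    exact hneg.false ⟨i, hi⟩
  have := h.corank_le_one hG hpsd
  omega

end WellSigned

theorem negEig_le_one_of_continuous {V : Type*} [Fintype V] [DecidableEq V] {G : SimpleGraph V}
    (hG : G.Connected) {d : ℕ} (hd : 2 ≤ d)
    (hκ : ∀ X : Matrix V V ℝ, X.IsHermitian → WellSigned G X → negEig X = 1 → corank X ≤ d)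
    {B : ℝ → Matrix V V ℝ} (hBc : Continuous B) (hBH : ∀ t, (B t).IsHermitian)
    (hBws : ∀ t ∈ Ico (0 : ℝ) 1, WellSigned G (B t))
    (hBcor : ∀ t ∈ Ico (0 : ℝ) 1, d ≤ corank (B t)) (hB0 : negEig (B 0) = 1) :
    negEig (B 1) ≤ 1 := by
  have hloc (t : ℝ) : ∀ᶠ s in 𝓝 t, negEig (B t) ≤ negEig (B s) ∧
      negEig (B s) + corank (B s) ≤ negEig (B t) + corank (B t) :=
    ((hBc.tendsto t).eventually (hBH t).eventually_negEig_le).mono fun s hs => hs (hBH s)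
  -- On `[0, 1)` we have `negEig ≥ 1` and `corank ≥ d`, and `corank ≤ d` wherever `negEig = 1`;
  -- so `min (negEig (B t)) 2` is locally constant there.
  have hconst : ∀ t ∈ Ico (0 : ℝ) 1, min (negEig (B t)) 2 = min (negEig (B 0)) 2 := by
    refine fun t ht => isPreconnected_Ico.constant (f := fun t => min (negEig (B t)) 2)
      (fun c hc => ?_) ht (left_mem_Ico.2 one_pos)
    rw [ContinuousWithinAt, nhds_discrete, tendsto_pure]
    filter_upwards [nhdsWithin_le_nhds (hloc c), self_mem_nhdsWithin] with s hs hsI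
    have := (hBws c hc).one_le_negEig hG (hBH c) (hd.trans (hBcor c hc))
    have := (hBws s hsI).one_le_negEig hG (hBH s) (hd.trans (hBcor s hsI))
    have := hBcor s hsI
    by_cases h1 : negEig (B c) = 1
    · have := hκ _ (hBH c) (hBws c hc) h1
      omega
    · omega
  obtain ⟨s, hs, hsI⟩ :=
    (((hloc 1).filter_mono nhdsWithin_le_nhds).and (Ico_mem_nhdsLT one_pos)).exists
  have := hconst s hsI
  rw [hB0] at this
  omega

/-- Let `G` be connected and `M` a well-signed `G`-matrix with exactly one negative
eigenvalue and corank `d ≥ 2`, where `d = κ(G)` is the maximum corank of a well-signed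
`G`-matrix with one negative eigenvalue.  If `G'` is a spanning subgraph of `G` and `A` is
a well-signed `G'`-matrix with `ker M ⊆ ker A`, then `A` has at most one negative
eigenvalue. -/
theorem stmt_11 {V : Type*} [Fintype V] [DecidableEq V]
    (G : SimpleGraph V) (hGc : G.Connected)
    (M : Matrix V V ℝ) (hM : M.IsHermitian) (hMws : WellSigned G M)
    (hMneg : negEig M = 1)
    (d : ℕ) (hd : d = corank M) (hd2 : 2 ≤ d)
    (hκ : ∀ M' : Matrix V V ℝ, M'.IsHermitian → WellSigned G M' → negEig M' = 1 →
      corank M' ≤ d)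
    (G' : SimpleGraph V) (hG' : G' ≤ G)
    (A : Matrix V V ℝ) (hA : A.IsHermitian) (hAws : WellSigned G' A)
    (hker : LinearMap.ker M.mulVecLin ≤ LinearMap.ker A.mulVecLin) :
    negEig A ≤ 1 := by
  set B : ℝ → Matrix V V ℝ := fun t => (1 - t) • M + t • A
  have hBker (t : ℝ) : LinearMap.ker M.mulVecLin ≤ LinearMap.ker (B t).mulVecLin := by
    intro x hx
    have hxA := hker hx
    simp only [LinearMap.mem_ker, mulVecLin_apply] at hx hxA ⊢
    simp [B, add_mulVec, smul_mulVec, hx, hxA]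
  have hB1 : B 1 = A := by simp [B]
  rw [← hB1]
  exact negEig_le_one_of_continuous hGc hd2 hκ (by fun_prop)
    (fun t => (hM.smul (.all _)).add (hA.smul (.all _)))
    (fun t ht => hMws.one_sub_smul_add_smul hAws hG' ht.1 ht.2)
    (fun t _ => hd ▸ Submodule.finrank_mono (hBker t)) (by simpa [B] using hMneg)
end
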